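/- arXiv:math/0012150 — 6 statements merged into one kernel-verified Lean document; each statement's English description precedes it below -/
import Mathlib

section
/- Let K be a field, a ∈ K, and suppose the polynomial T^p − a is irreducible over K for a prime p, with L = K(c) where c^p = a. Then for every x ∈ K, the field norm N_{L/K}(1 − x·c) equals 1 − x^p·a. -/
/-!
The characteristic polynomial of multiplication by `root f` on `K[X]/(f)` is the minimal
polynomial `f`, so `N(y - root f) = f(y)` for `y ∈ K`. For `x ≠ 0` write
`1 - x c = x (x⁻¹ - c)`; then `N(1 - x c) = x ^ p (x⁻¹ ^ p - a) = 1 - x ^ p a`.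
-/

open Polynomial

namespace AdjoinRoot

variable {K : Type*} [Field K] {f : K[X]}

theorem norm_algebraMap_sub_root (hf : f.Monic) (y : K) :
    Algebra.norm K (algebraMap K (AdjoinRoot f) y - root f) = f.eval y := by
  let pb := powerBasis hf.ne_zero
  calc Algebra.norm K (algebraMap K (AdjoinRoot f) y - root f)
      = (Matrix.scalar _ y - Algebra.leftMulMatrix pb.basis pb.gen).det := by
        rw [Algebra.norm_eq_matrix_det pb.basis, map_sub, AlgHom.commutes,
          Matrix.algebraMap_eq_diagonal, Pi.algebraMap_def, Algebra.algebraMap_self,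
          RingHom.id_apply, Matrix.scalar_apply, powerBasis_gen]
    _ = (Algebra.leftMulMatrix pb.basis pb.gen).charpoly.eval y := (Matrix.eval_charpoly _ _).symm
    _ = f.eval y := by rw [charpoly_leftMulMatrix, minpoly_powerBasis_gen_of_monic hf]

theorem norm_one_sub_mul_root (hf : f.Monic) {x : K} (hx : x ≠ 0) :
    Algebra.norm K (1 - algebraMap K (AdjoinRoot f) x * root f) =
      x ^ f.natDegree * f.eval x⁻¹ := by
  have hfactor : 1 - algebraMap K (AdjoinRoot f) x * root f =
      algebraMap K _ x * (algebraMap K _ x⁻¹ - root f) := by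
    rw [mul_sub, ← map_mul, mul_inv_cancel₀ hx, map_one]
  rw [hfactor, map_mul, Algebra.norm_algebraMap, norm_algebraMap_sub_root hf,
    (powerBasis hf.ne_zero).finrank, powerBasis_dim]

end AdjoinRoot

theorem norm_one_sub_mul_root_of_prime_pow_general
    (K : Type*) [Field K] (p : ℕ) (hp : p.Prime) (a : K) (x : K) :
    Algebra.norm K
        (1 - algebraMap K (AdjoinRoot (X ^ p - C a)) x * AdjoinRoot.root (X ^ p - C a))
      = 1 - x ^ p * a := by
  rcases eq_or_ne x 0 with rfl | hx
  · simp [hp.ne_zero]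
  rw [AdjoinRoot.norm_one_sub_mul_root (monic_X_pow_sub_C a hp.ne_zero) hx,
    natDegree_X_pow_sub_C]
  simp only [eval_sub, eval_pow, eval_X, eval_C]
  rw [mul_sub, ← mul_pow, mul_inv_cancel₀ hx, one_pow]

/-- If `T^p - a` is irreducible over `K` for a prime `p`, and `L = K(c)` with `c^p = a`,
then for every `x ∈ K` the field norm `N_{L/K}(1 - x·c)` equals `1 - x^p·a`. -/
theorem norm_one_sub_mul_root_of_prime_pow
    (K : Type*) [Field K] (p : ℕ) (hp : p.Prime) (a : K)
    (hirr : Irreducible (X ^ p - C a)) (x : K) :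
    Algebra.norm K
        (1 - algebraMap K (AdjoinRoot (X ^ p - C a)) x * AdjoinRoot.root (X ^ p - C a))
      = 1 - x ^ p * a :=
  norm_one_sub_mul_root_of_prime_pow_general K p hp a x
end

section
/- Let K be a finite field. Then the Milnor K-group K_q(K) vanishes for all q ≥ 2. In particular, for any two units a, b ∈ K^×, the Steinberg symbol {a, b} in K_2(K) is trivial. -/
open scoped TensorProduct

/-- The Steinberg relations submodule: generated by tensors `a₁ ⊗ ... ⊗ a_q` with
`a_i + a_j = 1` for some `i ≠ j`. -/
def MilnorRel (K : Type*) [Field K] (q : ℕ) :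
    Submodule ℤ (⨂[ℤ] _ : Fin q, Additive Kˣ) :=
  Submodule.span ℤ
    {t | ∃ a : Fin q → Kˣ, (∃ i j : Fin q, i ≠ j ∧ (a i : K) + (a j : K) = 1) ∧
      t = PiTensorProduct.tprod ℤ fun i => Additive.ofMul (a i)}

/-- The `q`-th Milnor K-group of a field: the quotient of the `q`-th tensor power of `K^×`
by the Steinberg relations. -/
def MilnorK (K : Type*) [Field K] (q : ℕ) :=
  (⨂[ℤ] _ : Fin q, Additive Kˣ) ⧸ MilnorRel K q

/-!
The group `Kˣ` is cyclic, say generated by `g`, so the `q`-fold tensor power of `Kˣ` is generated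
by `g ⊗ ⋯ ⊗ g`, and it suffices to kill the symbol `{g, g}` (placed in two slots, the other slots
holding `g`). In any field `{a, -a} = 0`, since `-a = (1 - a) / (1 - a⁻¹)`; as `a² = (-a)²` this
gives `2 {a, a} = 0`, and in characteristic `2` already `{g, g} = {g, -g} = 0`. In odd
characteristic a counting argument produces non-squares `a`, `b` with `a + b = 1`; writing
`a = g ^ s`, `b = g ^ t` with `s`, `t` odd, `0 = {a, b} = s t {g, g}` with `s t` odd, so `{g, g} = 0`.
-/

open Function PiTensorProduct Additive

theorem eq_zero_of_two_nsmul_of_odd_zsmul {M : Type*} [AddCommGroup M] {x : M} {m : ℤ}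
    (hm : Odd m) (h2 : 2 • x = 0) (hmx : m • x = 0) : x = 0 := by
  obtain ⟨k, rfl⟩ := hm
  calc x = (2 * k + 1) • x - k • (2 • x) := by module
    _ = 0 := by rw [hmx, h2, smul_zero, sub_zero]

theorem PiTensorProduct.exists_tprod_eq_zsmul_tprod_const {ι M : Type*} [Fintype ι]
    [AddCommGroup M] {g : M} (hg : ∀ x, x ∈ AddSubgroup.zmultiples g) (f : ι → M) :
    ∃ k : ℤ, tprod ℤ f = k • tprod ℤ fun _ => g := by
  choose k hk using fun i => AddSubgroup.mem_zmultiples_iff.mp (hg (f i))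
  refine ⟨∏ i, k i, ?_⟩
  rw [← MultilinearMap.map_smul_univ]
  simp only [hk]

theorem FiniteField.exists_not_isSquare_add_eq_one {K : Type*} [Field K] [Finite K]
    (hK : ringChar K ≠ 2) : ∃ a b : K, ¬IsSquare a ∧ ¬IsSquare b ∧ a + b = 1 := by
  obtain ⟨c, hc⟩ := FiniteField.exists_nonsquare hK
  by_contra! h
  -- otherwise `x ↦ 1 - c x` maps the squares injectively into the squares, missing `0`
  have hmaps (x : K) (hx : IsSquare x) : IsSquare (1 - c * x) := by
    obtain rfl | hx0 := eq_or_ne x 0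
    · simp
    by_contra hsq
    have hcx : IsSquare (c * x) := by
      by_contra hcx
      exact h _ _ hcx hsq (add_sub_cancel _ _)
    exact hc (by simpa [hx0] using hcx.div hx)
  have hc0 : c ≠ 0 := by rintro rfl; exact hc IsSquare.zero
  let f : {x : K // IsSquare x} → {x : K // IsSquare x} := fun x => ⟨1 - c * x, hmaps x x.2⟩
  have hf : Injective f := fun x y hxy =>
    Subtype.ext (mul_left_cancel₀ hc0 (sub_right_injective (congrArg Subtype.val hxy)))
  obtain ⟨x, hx⟩ := Finite.injective_iff_surjective.mp hf ⟨0, IsSquare.zero⟩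
  have hcx : c * x = 1 := (sub_eq_zero.mp (congrArg Subtype.val hx)).symm
  exact hc (eq_inv_of_mul_eq_one_left hcx ▸ x.2.inv)

namespace MilnorK

variable {K : Type*} [Field K] {q : ℕ} (B : Fin q → Additive Kˣ) {i j : Fin q} (hij : i ≠ j)

def slotSymbol :
    Additive Kˣ →ₗ[ℤ] Additive Kˣ →ₗ[ℤ] (⨂[ℤ] _ : Fin q, Additive Kˣ) ⧸ MilnorRel K q :=
  LinearMap.mk₂ ℤ (fun x y => Submodule.Quotient.mk (tprod ℤ (update (update B i x) j y)))
    (fun x x' y => by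
      simp only [update_comm hij, MultilinearMap.map_update_add, Submodule.Quotient.mk_add])
    (fun c x y => by
      simp only [update_comm hij, MultilinearMap.map_update_smul, Submodule.Quotient.mk_smul])
    (fun x y y' => by
      simp only [MultilinearMap.map_update_add, Submodule.Quotient.mk_add])
    (fun c x y => by
      simp only [MultilinearMap.map_update_smul, Submodule.Quotient.mk_smul])

theorem slotSymbol_apply (x y : Additive Kˣ) :
    slotSymbol B hij x y = Submodule.Quotient.mk (tprod ℤ (update (update B i x) j y)) :=
  rfl

theorem slotSymbol_eq_zero_of_add_eq_one {a b : Kˣ} (h : (a : K) + b = 1) :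
    slotSymbol B hij (ofMul a) (ofMul b) = 0 := by
  rw [slotSymbol_apply, Submodule.Quotient.mk_eq_zero]
  refine Submodule.subset_span
    ⟨fun k => (update (update B i (ofMul a)) j (ofMul b) k).toMul, ⟨i, j, hij, ?_⟩, rfl⟩
  simpa [update_of_ne hij] using h

theorem slotSymbol_neg_self (a : Kˣ) : slotSymbol B hij (ofMul a) (ofMul (-a)) = 0 := by
  obtain rfl | ha := eq_or_ne a 1
  · simp
  have ha' : (a : K) ≠ 1 := fun h => ha (Units.ext h)
  obtain ⟨u, hu⟩ : IsUnit (1 - (a : K)) := (sub_ne_zero.mpr ha'.symm).isUnit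
  obtain ⟨w, hw⟩ : IsUnit (1 - (a⁻¹ : Kˣ) : K) :=
    (sub_ne_zero.mpr fun h => ha' (by simpa using h.symm)).isUnit
  have hneg : -a = u * w⁻¹ := by
    rw [eq_mul_inv_iff_mul_eq, Units.ext_iff]
    simp only [Units.val_mul, Units.val_neg, hu, hw, Units.val_inv_eq_inv_val]
    field_simp
    ring
  have hw' : slotSymbol B hij (ofMul a) (ofMul w) = 0 := by
    rw [← neg_eq_zero, ← LinearMap.map_neg₂, ← ofMul_inv]
    exact slotSymbol_eq_zero_of_add_eq_one B hij (by rw [hw]; ring)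
  rw [hneg, ofMul_mul, ofMul_inv, map_add, map_neg, hw', neg_zero, add_zero]
  exact slotSymbol_eq_zero_of_add_eq_one B hij (by rw [hu]; ring)

theorem two_nsmul_slotSymbol_self (a : Kˣ) : 2 • slotSymbol B hij (ofMul a) (ofMul a) = 0 := by
  rw [← map_nsmul, ← ofMul_pow, ← neg_sq, ofMul_pow, map_nsmul, slotSymbol_neg_self, nsmul_zero]

theorem slotSymbol_generator_eq_zero [Finite K] {g : Kˣ} (hg : ∀ x, x ∈ Subgroup.zpowers g) :
    slotSymbol B hij (ofMul g) (ofMul g) = 0 := by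
  by_cases hK : ringChar K = 2
  · have hneg : -g = g := Units.ext (by
      rw [Units.val_neg, ← neg_one_mul, neg_one_eq_one_iff.mpr hK, one_mul])
    simpa [hneg] using slotSymbol_neg_self B hij g
  obtain ⟨a, b, ha, hb, hab⟩ := FiniteField.exists_not_isSquare_add_eq_one hK
  lift a to Kˣ using isUnit_iff_ne_zero.mpr (by rintro rfl; exact ha .zero)
  lift b to Kˣ using isUnit_iff_ne_zero.mpr (by rintro rfl; exact hb .zero)
  obtain ⟨s, rfl⟩ := Subgroup.mem_zpowers_iff.mp (hg a)
  obtain ⟨t, rfl⟩ := Subgroup.mem_zpowers_iff.mp (hg b)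
  have hodd {n : ℤ} (hn : ¬IsSquare ((g ^ n : Kˣ) : K)) : Odd n :=
    Int.not_even_iff_odd.mp fun he => hn ((he.isSquare_zpow g).map (Units.coeHom K))
  refine eq_zero_of_two_nsmul_of_odd_zsmul ((hodd ha).mul (hodd hb))
    (two_nsmul_slotSymbol_self B hij g) ?_
  rw [← slotSymbol_eq_zero_of_add_eq_one B hij hab, ofMul_zpow, ofMul_zpow, map_zsmul,
    map_zsmul, LinearMap.smul_apply, smul_smul, mul_comm]

end MilnorK

open MilnorK in
theorem milnorRel_eq_top {K : Type*} [Field K] [Finite K] {q : ℕ} (hq : 2 ≤ q) :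
    MilnorRel K q = ⊤ := by
  obtain ⟨g, hg⟩ := IsCyclic.exists_generator (α := Kˣ)
  have hg' (x : Additive Kˣ) : x ∈ AddSubgroup.zmultiples (ofMul g) := by
    obtain ⟨k, hk⟩ := Subgroup.mem_zpowers_iff.mp (hg x.toMul)
    exact AddSubgroup.mem_zmultiples_iff.mpr ⟨k, by rw [← ofMul_zpow, hk, ofMul_toMul]⟩
  rw [eq_top_iff, ← span_tprod_eq_top, Submodule.span_le]
  rintro _ ⟨f, rfl⟩
  obtain ⟨k, hk⟩ := exists_tprod_eq_zsmul_tprod_const hg' f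
  rw [SetLike.mem_coe, hk]
  refine Submodule.smul_mem _ k ?_
  have h01 : (⟨0, by omega⟩ : Fin q) ≠ ⟨1, by omega⟩ := by simp
  simpa [slotSymbol_apply, Submodule.Quotient.mk_eq_zero] using
    slotSymbol_generator_eq_zero (fun _ => ofMul g) h01 hg

/-- For a finite field `K`, the Milnor K-group `K_q(K)` vanishes for all `q ≥ 2`; in
particular every Steinberg symbol `{a, b}` in `K_2(K)` is trivial. -/
theorem milnorK_finite_field_vanish (K : Type*) [Field K] [Finite K] :
    (∀ q : ℕ, 2 ≤ q → Subsingleton (MilnorK K q)) ∧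
      ∀ a b : Kˣ,
        (Submodule.Quotient.mk
            (PiTensorProduct.tprod ℤ ![Additive.ofMul a, Additive.ofMul b]) :
          MilnorK K 2) = 0 := by
  refine ⟨fun q hq => Submodule.Quotient.subsingleton_iff.mpr (milnorRel_eq_top hq),
    fun a b => ?_⟩
  rw [Submodule.Quotient.mk_eq_zero, milnorRel_eq_top le_rfl]
  exact Submodule.mem_top
end

section
/- Let A be a ring, π ∈ A a nonzero element such that A is π-adically complete and separated (A ≅ lim A/π^n A), and suppose R = A/πA is an integral domain and π is a nonzero divisor of A. Let B = A[π^{-1}]. Then every unit of B can be written uniquely as u·π^n with u ∈ A^× and n ∈ ℤ; that is, B^× ≅ A^× × ℤ. -/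
/-!
Since `A/πA` is a domain, `π` is a prime element. If a unit of `A[π⁻¹]` is `a/πᵏ` with inverse
`a'/πˡ`, then `a * a' = π^(k+l)` in `A`, and peeling off one factor `π` at a time (cancelling it,
as `π` is regular) shows `a = u * πᵐ` with `u ∈ Aˣ`. Uniqueness: `u * πⁿ = 1` in `A[π⁻¹]` makes
`π^|n|` a unit of `A`, which forces `n = 0` because `π` is prime.
-/

theorem Prime.exists_unit_mul_pow_of_mul_eq_pow {M : Type*} [CommMonoidWithZero M] {p : M}
    (hp : Prime p) (hreg : IsLeftRegular p) {n : ℕ} {a b : M} (h : a * b = p ^ n) :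
    ∃ (u : Mˣ) (m : ℕ), a = u * p ^ m := by
  induction n generalizing a b with
  | zero => exact ⟨(IsUnit.of_mul_eq_one b (by simpa using h)).unit, 0, by simp⟩
  | succ n ih =>
    rcases hp.dvd_or_dvd ⟨p ^ n, by rw [h, pow_succ']⟩ with ⟨c, rfl⟩ | ⟨c, rfl⟩
    · obtain ⟨u, m, rfl⟩ := ih (hreg (by rw [← mul_assoc, h, pow_succ'] : p * (c * b) = p * p ^ n))
      exact ⟨u, m + 1, by rw [pow_succ', mul_left_comm]⟩
    · exact ih (hreg (by rw [mul_left_comm, h, pow_succ'] : p * (a * c) = p * p ^ n))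

theorem prime_of_isDomain_quotient_span_singleton {A : Type*} [CommRing A] {π : A}
    (hreg : π ∈ nonZeroDivisors A) [IsDomain (A ⧸ Ideal.span {π})] : Prime π :=
  have : Nontrivial A := (Ideal.Quotient.mk (Ideal.span {π})).domain_nontrivial
  (Ideal.span_singleton_prime (nonZeroDivisors.ne_zero hreg)).1
    ((Ideal.Quotient.isDomain_iff_prime _).1 ‹_›)

namespace IsLocalization.Away

variable {A S : Type*} [CommRing A] [CommRing S] [Algebra A S] {π : A} [IsLocalization.Away π S]

theorem exists_eq_map_mul_zpow (hπ : Prime π) (hreg : π ∈ nonZeroDivisors A) {πS : Sˣ}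
    (hπS : (πS : S) = algebraMap A S π) (b : Sˣ) :
    ∃ (u : Aˣ) (n : ℤ), b = Units.map (algebraMap A S : A →* S) u * πS ^ n := by
  have hinj := IsLocalization.injective S (Submonoid.powers_le.2 hreg)
  obtain ⟨k, a, ha⟩ := surj π (b : S)
  obtain ⟨k', a', ha'⟩ := surj π ((b⁻¹ : Sˣ) : S)
  have hprod : a * a' = π ^ (k + k') := hinj <| by
    rw [map_mul, ← ha, ← ha', map_pow, pow_add]
    linear_combination (algebraMap A S π ^ k * algebraMap A S π ^ k') * b.mul_inv
  obtain ⟨u, m, rfl⟩ := hπ.exists_unit_mul_pow_of_mul_eq_pow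
    (isRegular_iff_mem_nonZeroDivisors.2 hreg).left hprod
  refine ⟨u, m - k, ?_⟩
  rw [zpow_sub, zpow_natCast, zpow_natCast, ← mul_assoc, eq_mul_inv_iff_mul_eq]
  ext
  simp [hπS, ha]

theorem eq_one_of_map_mul_zpow_eq_one (hπ : ¬IsUnit π) (hreg : π ∈ nonZeroDivisors A) {πS : Sˣ}
    (hπS : (πS : S) = algebraMap A S π) {u : Aˣ} {n : ℤ}
    (h : Units.map (algebraMap A S : A →* S) u * πS ^ n = 1) : u = 1 ∧ n = 0 := by
  have hinj := IsLocalization.injective S (Submonoid.powers_le.2 hreg)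
  have hpow (k : ℕ) : ((πS ^ k : Sˣ) : S) = algebraMap A S (π ^ k) := by simp [hπS]
  obtain ⟨k, hk⟩ := Int.eq_nat_or_neg n
  have hunit : IsUnit (π ^ k) := by
    rcases hk with rfl | rfl
    · refine .of_mul_eq_one_right (u : A) (hinj ?_)
      simpa [hpow] using congrArg Units.val h
    · have hu : Units.map (algebraMap A S : A →* S) u = πS ^ k := by
        simpa using mul_eq_one_iff_eq_inv.1 h
      have hu : (u : A) = π ^ k := hinj (by simpa [hpow] using congrArg Units.val hu)
      exact hu ▸ u.isUnit
  obtain rfl : k = 0 := by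
    by_contra hk0
    exact hπ ((isUnit_pow_iff hk0).1 hunit)
  obtain rfl : n = 0 := by simpa using hk
  exact ⟨Units.map_injective hinj (by simpa using h), rfl⟩

end IsLocalization.Away

theorem units_of_pi_inverted_ring_general
    (A : Type*) [CommRing A] (π : A) (hreg : π ∈ nonZeroDivisors A)
    [IsDomain (A ⧸ Ideal.span {π})]
    (πB : (Localization.Away π)ˣ) (hπB : (πB : Localization.Away π) = algebraMap A _ π) :
    ∀ b : (Localization.Away π)ˣ,
      ∃! un : Aˣ × ℤ,
        b = Units.map (algebraMap A (Localization.Away π) : A →* _) un.1 * πB ^ un.2 := by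
  have hπ := prime_of_isDomain_quotient_span_singleton hreg
  intro b
  obtain ⟨u, n, rfl⟩ := IsLocalization.Away.exists_eq_map_mul_zpow hπ hreg hπB b
  refine ⟨(u, n), rfl, fun ⟨v, m⟩ h => ?_⟩
  obtain ⟨huv, hnm⟩ := IsLocalization.Away.eq_one_of_map_mul_zpow_eq_one hπ.not_isUnit hreg hπB
    (u := v / u) (n := m - n)
    (by rw [map_div, zpow_sub, ← div_eq_mul_inv, div_mul_div_comm, div_eq_one]; exact h.symm)
  exact Prod.ext (div_eq_one.1 huv) (sub_eq_zero.1 hnm)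

/-- Let `A` be a ring, `π ∈ A` a regular element such that `A` is `π`-adically complete and
separated, and suppose `R = A/πA` is an integral domain.  Let `B = A[π⁻¹]`.  Then every
unit of `B` is uniquely of the form `u·πⁿ` with `u ∈ A^×` and `n ∈ ℤ`;
that is, `B^× ≅ A^× × ℤ`. -/
theorem units_of_pi_inverted_ring
    (A : Type*) [CommRing A] (π : A) (hreg : π ∈ nonZeroDivisors A)
    [IsAdicComplete (Ideal.span {π}) A]
    [IsDomain (A ⧸ Ideal.span {π})]
    (πB : (Localization.Away π)ˣ) (hπB : (πB : Localization.Away π) = algebraMap A _ π) :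
    ∀ b : (Localization.Away π)ˣ,
      ∃! un : Aˣ × ℤ,
        b = Units.map (algebraMap A (Localization.Away π) : A →* _) un.1 * πB ^ un.2 :=
  units_of_pi_inverted_ring_general A π hreg πB hπB
end

section
/- Let K be a complete discretely valued field with residue field k, π a uniformizer of K. There exists a unique group homomorphism ∂ : K_2(K) → k^× (the tame symbol) satisfying ∂({u, π}) = ū and ∂({u, v}) = 1 for all units u, v ∈ O_K^×, where ū denotes the residue of u. -/
open scoped TensorProduct
open IsLocalRing

/-- The Steinberg relations: the subgroup of `K^× ⊗ K^×` generated by the tensors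
`x ⊗ (1 - x)`. -/
def SteinbergRel (K : Type*) [Field K] :
    Submodule ℤ (Additive Kˣ ⊗[ℤ] Additive Kˣ) :=
  Submodule.span ℤ
    {t | ∃ x y : Kˣ, (x : K) + (y : K) = 1 ∧
      t = Additive.ofMul x ⊗ₜ[ℤ] Additive.ofMul y}

/-- The second Milnor K-group `K₂(K)`. -/
abbrev MilnorK2 (K : Type*) [Field K] :=
  (Additive Kˣ ⊗[ℤ] Additive Kˣ) ⧸ SteinbergRel K

/-- The Steinberg symbol `{x, y}` in `K₂(K)`. -/
noncomputable def milnorSymbol {K : Type*} [Field K] (x y : Kˣ) : MilnorK2 K :=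
  Submodule.Quotient.mk (Additive.ofMul x ⊗ₜ[ℤ] Additive.ofMul y)

/-!
Every `x ∈ Kˣ` is uniquely `u πⁿ` with `u ∈ Oˣ`, so `Kˣ ≃ Oˣ × ℤ`. In these coordinates the tame
symbol of `x = u πᵐ` and `y = v πⁿ` is `(-1)ᵐⁿ ūⁿ v̄⁻ᵐ`, which is visibly bimultiplicative. It kills
the Steinberg relations: if `v(x) > 0` then `1 - x` is a unit of `O` with residue `1`; the case
`v(x) < 0` reduces to this through `1 - x = -x (1 - x⁻¹)` and `∂(x, -x) = 1`; if
`v(x) = v(1 - x) = 0` both exponents vanish. Uniqueness: bilinearity, antisymmetry and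
`{π, π} = {-1, π}` express every symbol through the symbols `{u, v}` and `{u, π}` with `u, v ∈ Oˣ`.
-/

namespace MilnorK2

variable {K : Type*} [Field K]

theorem symbol_mul_left (x x' y : Kˣ) :
    milnorSymbol (x * x') y = milnorSymbol x y + milnorSymbol x' y :=
  map_add ((SteinbergRel K).mkQ ∘ₗ (TensorProduct.mk ℤ _ _).flip (Additive.ofMul y)) _ _

theorem symbol_mul_right (x y y' : Kˣ) :
    milnorSymbol x (y * y') = milnorSymbol x y + milnorSymbol x y' :=
  map_add ((SteinbergRel K).mkQ ∘ₗ TensorProduct.mk ℤ _ _ (Additive.ofMul x)) _ _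

theorem symbol_zpow_left (x y : Kˣ) (n : ℤ) :
    milnorSymbol (x ^ n) y = n • milnorSymbol x y :=
  map_zsmul ((SteinbergRel K).mkQ ∘ₗ (TensorProduct.mk ℤ _ _).flip (Additive.ofMul y)) n _

theorem symbol_zpow_right (x y : Kˣ) (n : ℤ) :
    milnorSymbol x (y ^ n) = n • milnorSymbol x y :=
  map_zsmul ((SteinbergRel K).mkQ ∘ₗ TensorProduct.mk ℤ _ _ (Additive.ofMul x)) n _

theorem symbol_one_left (y : Kˣ) : milnorSymbol 1 y = 0 :=
  map_zero ((SteinbergRel K).mkQ ∘ₗ (TensorProduct.mk ℤ _ _).flip (Additive.ofMul y))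

theorem symbol_inv_left (x y : Kˣ) : milnorSymbol x⁻¹ y = -milnorSymbol x y := by
  simpa using symbol_zpow_left x y (-1)

theorem symbol_inv_right (x y : Kˣ) : milnorSymbol x y⁻¹ = -milnorSymbol x y := by
  simpa using symbol_zpow_right x y (-1)

theorem symbol_eq_zero_of_add_eq_one {x y : Kˣ} (h : (x : K) + y = 1) :
    milnorSymbol x y = 0 :=
  (Submodule.Quotient.mk_eq_zero _).mpr (Submodule.subset_span ⟨x, y, h, rfl⟩)

/-- `-x = (1 - x) / (1 - x⁻¹)`, and both factors pair trivially with `x`. -/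
theorem symbol_neg_self (x : Kˣ) : milnorSymbol x (-x) = 0 := by
  obtain rfl | hx := eq_or_ne x 1
  · exact symbol_one_left _
  have hx' : (x : K) ≠ 1 := Units.val_eq_one.not.mpr hx
  have h₁ : (1 : K) - x ≠ 0 := sub_ne_zero.mpr hx'.symm
  have h₂ : (1 : K) - (x : K)⁻¹ ≠ 0 := sub_ne_zero.mpr fun h ↦ hx' (inv_eq_one.mp h.symm)
  have hneg : -x = Units.mk0 _ h₁ * (Units.mk0 _ h₂)⁻¹ := by
    have := x.ne_zero
    ext
    simp only [Units.val_neg, Units.val_mul, Units.val_inv_eq_inv_val, Units.val_mk0]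
    field_simp
    ring
  have hx₁ := symbol_eq_zero_of_add_eq_one (x := x) (y := Units.mk0 _ h₁) (by simp)
  have hx₂ := symbol_eq_zero_of_add_eq_one (x := x⁻¹) (y := Units.mk0 _ h₂) (by simp)
  rw [symbol_inv_left, neg_eq_zero] at hx₂
  rw [hneg, symbol_mul_right, symbol_inv_right, hx₁, hx₂, neg_zero, add_zero]

theorem symbol_swap (x y : Kˣ) : milnorSymbol y x = -milnorSymbol x y := by
  have h := symbol_neg_self (x * y)
  have hx : milnorSymbol x (-(x * y)) = milnorSymbol x y := by
    rw [← neg_mul, symbol_mul_right, symbol_neg_self, zero_add]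
  have hy : milnorSymbol y (-(x * y)) = milnorSymbol y x := by
    rw [← mul_neg, symbol_mul_right, symbol_neg_self, add_zero]
  rw [symbol_mul_left, hx, hy] at h
  exact eq_neg_of_add_eq_zero_right h

theorem symbol_self (x : Kˣ) : milnorSymbol x x = milnorSymbol (-1) x := by
  have h := symbol_neg_self x
  rw [← neg_one_mul, symbol_mul_right, symbol_swap (-1) x] at h
  exact (neg_add_eq_zero.mp h).symm

theorem symbol_mul_zpow (a b p : Kˣ) (m n : ℤ) :
    milnorSymbol (a * p ^ m) (b * p ^ n) = milnorSymbol a b + n • milnorSymbol a p -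
      m • milnorSymbol b p + (m * n) • milnorSymbol (-1) p := by
  rw [symbol_mul_left, symbol_mul_right, symbol_mul_right, symbol_zpow_right, symbol_zpow_left,
    symbol_zpow_left, symbol_zpow_right, symbol_swap b p, symbol_self]
  module

theorem addMonoidHom_ext {G : Type*} [AddCommGroup G] {d d' : MilnorK2 K →+ G}
    (h : ∀ x y : Kˣ, d (milnorSymbol x y) = d' (milnorSymbol x y)) : d = d' := by
  ext z
  obtain ⟨t, rfl⟩ := Submodule.Quotient.mk_surjective _ z
  induction t using TensorProduct.induction_on with
  | zero => simp only [Submodule.Quotient.mk_zero, map_zero]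
  | tmul x y => exact h x.toMul y.toMul
  | add s t hs ht => simp only [Submodule.Quotient.mk_add, map_add, hs, ht]

end MilnorK2

theorem zsmul_ofMul_neg_one_of_even {R : Type*} [Monoid R] [HasDistribNeg R] {n : ℤ}
    (hn : Even n) : n • Additive.ofMul (-1 : Rˣ) = 0 := by
  rw [← ofMul_zpow, hn.neg_one_zpow, ofMul_one]

namespace IsDiscreteValuationRing

variable {O K : Type*} [CommRing O] [IsDomain O] [IsDiscreteValuationRing O]
  [Field K] [Algebra O K] [IsFractionRing O K] {π : O} (hπ : Irreducible π)

variable (K) in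
noncomputable def uniformizerUnit : Kˣ :=
  Units.mk0 (algebraMap O K π) (IsFractionRing.to_map_ne_zero_of_mem_nonZeroDivisors
    (mem_nonZeroDivisors_of_ne_zero hπ.ne_zero))

variable (K) in
noncomputable def unitsZPowHom : Oˣ × Multiplicative ℤ →* Kˣ :=
  (Units.map (algebraMap O K).toMonoidHom).coprod (zpowersHom Kˣ (uniformizerUnit K hπ))

theorem unitsZPowHom_apply (u : Oˣ) (n : Multiplicative ℤ) :
    unitsZPowHom K hπ (u, n) =
      Units.map (algebraMap O K).toMonoidHom u * uniformizerUnit K hπ ^ n.toAdd :=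
  rfl

theorem eq_one_of_unit_mul_pow_eq_one {u : Oˣ} {k : ℕ}
    (h : Units.map (algebraMap O K).toMonoidHom u * uniformizerUnit K hπ ^ k = 1) :
    u = 1 ∧ k = 0 := by
  have h' : (u : O) * π ^ k = 1 := by
    apply IsFractionRing.injective O K
    simpa [Units.ext_iff, uniformizerUnit] using h
  obtain rfl : k = 0 := by
    by_contra hk
    exact hπ.not_isUnit ((isUnit_pow_iff hk).mp (.of_mul_eq_one_right _ h'))
  exact ⟨Units.ext (by simpa using h'), rfl⟩

theorem unitsZPowHom_injective : Function.Injective (unitsZPowHom K hπ) := by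
  refine (injective_iff_map_eq_one _).mpr fun p hp ↦ ?_
  wlog hn : 0 ≤ p.2.toAdd generalizing p
  · exact inv_eq_one.mp (this p⁻¹ (by rw [map_inv, hp, inv_one]) (by simp; omega))
  obtain ⟨u, n⟩ := p
  obtain ⟨k, hk⟩ := Int.eq_ofNat_of_zero_le hn
  rw [unitsZPowHom_apply, hk, zpow_natCast] at hp
  obtain ⟨rfl, rfl⟩ := eq_one_of_unit_mul_pow_eq_one hπ hp
  exact Prod.ext rfl (Multiplicative.toAdd.injective hk)

theorem unitsZPowHom_surjective : Function.Surjective (unitsZPowHom K hπ) := by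
  have hO (a : O) (ha : algebraMap O K a ≠ 0) : Units.mk0 _ ha ∈ (unitsZPowHom K hπ).range := by
    obtain ⟨n, u, rfl⟩ := eq_unit_mul_pow_irreducible (ne_zero_of_map ha) hπ
    exact ⟨(u, .ofAdd n), by ext; simp [unitsZPowHom_apply, uniformizerUnit]⟩
  intro x
  obtain ⟨a, b, hb, hab⟩ := IsFractionRing.div_surjective (A := O) (x : K)
  have ha : algebraMap O K a ≠ 0 := fun h ↦ x.ne_zero (by rw [← hab, h, zero_div])
  have hb' := IsFractionRing.to_map_ne_zero_of_mem_nonZeroDivisors (K := K) hb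
  obtain ⟨p, hp⟩ := mul_mem (hO a ha) (inv_mem (hO b hb'))
  exact ⟨p, hp.trans (Units.ext (by simp [← hab, div_eq_mul_inv]))⟩

variable (K) in
noncomputable def unitsEquivOfIrreducible : Kˣ ≃* Oˣ × Multiplicative ℤ :=
  (MulEquiv.ofBijective _ ⟨unitsZPowHom_injective (K := K) hπ, unitsZPowHom_surjective hπ⟩).symm

noncomputable def unitPart (x : Kˣ) : Oˣ :=
  (unitsEquivOfIrreducible K hπ x).1

noncomputable def ord (x : Kˣ) : ℤ :=
  (unitsEquivOfIrreducible K hπ x).2.toAdd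

theorem unitsMap_unitPart_mul_zpow_ord (x : Kˣ) :
    Units.map (algebraMap O K).toMonoidHom (unitPart hπ x) * uniformizerUnit K hπ ^ ord hπ x
      = x :=
  (unitsEquivOfIrreducible K hπ).symm_apply_apply x

theorem unitsEquivOfIrreducible_unitsMap_mul_zpow (u : Oˣ) (n : ℤ) :
    unitsEquivOfIrreducible K hπ
        (Units.map (algebraMap O K).toMonoidHom u * uniformizerUnit K hπ ^ n) = (u, .ofAdd n) :=
  (MulEquiv.symm_apply_eq _).mpr rfl

theorem unitPart_unitsMap_mul_zpow (u : Oˣ) (n : ℤ) :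
    unitPart hπ (Units.map (algebraMap O K).toMonoidHom u * uniformizerUnit K hπ ^ n) = u := by
  rw [unitPart, unitsEquivOfIrreducible_unitsMap_mul_zpow]

theorem ord_unitsMap_mul_zpow (u : Oˣ) (n : ℤ) :
    ord hπ (Units.map (algebraMap O K).toMonoidHom u * uniformizerUnit K hπ ^ n) = n := by
  rw [ord, unitsEquivOfIrreducible_unitsMap_mul_zpow, toAdd_ofAdd]

theorem unitPart_unitsMap (u : Oˣ) :
    unitPart hπ (Units.map (algebraMap O K).toMonoidHom u) = u := by
  simpa using unitPart_unitsMap_mul_zpow hπ u 0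

theorem ord_unitsMap (u : Oˣ) : ord hπ (Units.map (algebraMap O K).toMonoidHom u) = 0 := by
  simpa using ord_unitsMap_mul_zpow hπ u 0

theorem ord_uniformizerUnit : ord hπ (uniformizerUnit K hπ) = 1 := by
  simpa using ord_unitsMap_mul_zpow (K := K) hπ 1 1

theorem unitPart_mul (x y : Kˣ) : unitPart hπ (x * y) = unitPart hπ x * unitPart hπ y := by
  rw [unitPart, map_mul, Prod.fst_mul, unitPart, unitPart]

theorem ord_mul (x y : Kˣ) : ord hπ (x * y) = ord hπ x + ord hπ y := by
  rw [ord, map_mul, Prod.snd_mul, toAdd_mul, ord, ord]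

theorem unitPart_inv (x : Kˣ) : unitPart hπ x⁻¹ = (unitPart hπ x)⁻¹ := by
  rw [unitPart, map_inv, Prod.fst_inv, unitPart]

theorem ord_inv (x : Kˣ) : ord hπ x⁻¹ = -ord hπ x := by
  rw [ord, map_inv, Prod.snd_inv, toAdd_inv, ord]

theorem neg_eq_unitsMap_neg_one_mul (x : Kˣ) :
    -x = Units.map (algebraMap O K).toMonoidHom (-1) * uniformizerUnit K hπ ^ (0 : ℤ) * x := by
  ext; simp

theorem unitPart_neg (x : Kˣ) : unitPart hπ (-x) = -unitPart hπ x := by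
  rw [neg_eq_unitsMap_neg_one_mul hπ, unitPart_mul, unitPart_unitsMap_mul_zpow, neg_one_mul]

theorem ord_neg (x : Kˣ) : ord hπ (-x) = ord hπ x := by
  rw [neg_eq_unitsMap_neg_one_mul hπ, ord_mul, ord_unitsMap_mul_zpow, zero_add]

theorem _root_.MilnorK2.addMonoidHom_ext_of_irreducible {G : Type*} [AddCommGroup G]
    {d d' : MilnorK2 K →+ G}
    (h_units : ∀ u v : Oˣ, d (milnorSymbol (Units.map (algebraMap O K).toMonoidHom u)
        (Units.map (algebraMap O K).toMonoidHom v)) =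
      d' (milnorSymbol (Units.map (algebraMap O K).toMonoidHom u)
        (Units.map (algebraMap O K).toMonoidHom v)))
    (h_uniformizer : ∀ u : Oˣ,
      d (milnorSymbol (Units.map (algebraMap O K).toMonoidHom u) (uniformizerUnit K hπ)) =
        d' (milnorSymbol (Units.map (algebraMap O K).toMonoidHom u) (uniformizerUnit K hπ))) :
    d = d' := by
  refine MilnorK2.addMonoidHom_ext fun x y ↦ ?_
  have h_neg_one : (-1 : Kˣ) = Units.map (algebraMap O K).toMonoidHom (-1) := by ext; simp
  rw [← unitsMap_unitPart_mul_zpow_ord hπ x, ← unitsMap_unitPart_mul_zpow_ord hπ y,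
    MilnorK2.symbol_mul_zpow, h_neg_one]
  simp only [map_add, map_sub, map_zsmul, h_units, h_uniformizer]

/-- The residue of `(-1)^(v(x) v(y)) x^v(y) y^(-v(x))`, written additively. -/
noncomputable def tameSymbol (x y : Kˣ) : Additive (ResidueField O)ˣ :=
  (ord hπ x * ord hπ y) • .ofMul (-1) +
    ord hπ y • .ofMul (Units.map (residue O).toMonoidHom (unitPart hπ x)) -
    ord hπ x • .ofMul (Units.map (residue O).toMonoidHom (unitPart hπ y))

theorem tameSymbol_mul_left (x x' y : Kˣ) :
    tameSymbol hπ (x * x') y = tameSymbol hπ x y + tameSymbol hπ x' y := by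
  rw [tameSymbol, tameSymbol, tameSymbol, unitPart_mul, ord_mul, map_mul, ofMul_mul]
  module

theorem tameSymbol_mul_right (x y y' : Kˣ) :
    tameSymbol hπ x (y * y') = tameSymbol hπ x y + tameSymbol hπ x y' := by
  rw [tameSymbol, tameSymbol, tameSymbol, unitPart_mul, ord_mul, map_mul, ofMul_mul]
  module

theorem tameSymbol_inv_left (x y : Kˣ) : tameSymbol hπ x⁻¹ y = -tameSymbol hπ x y := by
  rw [tameSymbol, tameSymbol, unitPart_inv, ord_inv, map_inv, ofMul_inv]
  module

theorem tameSymbol_swap (x y : Kˣ) : tameSymbol hπ y x = -tameSymbol hπ x y := by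
  have h := zsmul_ofMul_neg_one_of_even (R := ResidueField O) (even_two_mul (ord hπ x * ord hπ y))
  rw [tameSymbol, tameSymbol]
  linear_combination (norm := module) h

theorem tameSymbol_neg_self (x : Kˣ) : tameSymbol hπ x (-x) = 0 := by
  have h := zsmul_ofMul_neg_one_of_even (R := ResidueField O) (Int.even_mul_pred_self (ord hπ x))
  have hres : Units.map (residue O).toMonoidHom (-unitPart hπ x) =
      -1 * Units.map (residue O).toMonoidHom (unitPart hπ x) :=
    (Units.map_neg (residue O) _).trans (neg_one_mul _).symm
  rw [tameSymbol, unitPart_neg, ord_neg, hres, ofMul_mul]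
  linear_combination (norm := module) h

theorem tameSymbol_unitsMap_unitsMap (u v : Oˣ) :
    tameSymbol hπ (Units.map (algebraMap O K).toMonoidHom u)
      (Units.map (algebraMap O K).toMonoidHom v) = 0 := by
  rw [tameSymbol, ord_unitsMap, ord_unitsMap]
  simp

theorem tameSymbol_unitsMap_uniformizerUnit (u : Oˣ) :
    tameSymbol hπ (Units.map (algebraMap O K).toMonoidHom u) (uniformizerUnit K hπ) =
      .ofMul (Units.map (residue O).toMonoidHom u) := by
  rw [tameSymbol, ord_unitsMap, ord_uniformizerUnit, unitPart_unitsMap]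
  simp

/-- If `v(x) > 0` then `1 - x` is a unit of `O` with residue `1`. -/
theorem tameSymbol_eq_zero_of_add_eq_one_of_pos {x y : Kˣ} (h : (x : K) + y = 1)
    (hx : 0 < ord hπ x) : tameSymbol hπ x y = 0 := by
  obtain ⟨k, hk⟩ := Int.eq_ofNat_of_zero_le hx.le
  set c : O := 1 - unitPart hπ x * π ^ k
  have hc : residue O c = 1 := by
    have hπ0 : residue O π = 0 := (residue_eq_zero_iff π).mpr hπ.not_isUnit
    simp [c, hπ0, zero_pow (show k ≠ 0 by omega)]
  have hcu : IsUnit c := (residue_ne_zero_iff_isUnit c).mp (hc ▸ one_ne_zero)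
  have hy : y =
      Units.map (algebraMap O K).toMonoidHom hcu.unit * uniformizerUnit K hπ ^ (0 : ℤ) := by
    have hx' := congrArg Units.val (unitsMap_unitPart_mul_zpow_ord hπ x)
    rw [hk] at hx'
    ext
    simp [c, ← hx', uniformizerUnit, ← h]
  have hρ : Units.map (residue O).toMonoidHom hcu.unit = 1 := Units.ext hc
  rw [tameSymbol, hy, unitPart_unitsMap_mul_zpow, ord_unitsMap_mul_zpow, hρ, ofMul_one]
  simp

theorem tameSymbol_eq_zero_of_add_eq_one_of_neg {x y : Kˣ} (h : (x : K) + y = 1)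
    (hx : ord hπ x < 0) : tameSymbol hπ x y = 0 := by
  have hz : ((x⁻¹ : Kˣ) : K) + (y * (-x)⁻¹ : Kˣ) = 1 := by
    have := x.ne_zero
    simp only [Units.val_inv_eq_inv_val, Units.val_mul, Units.val_neg]
    field_simp
    linear_combination -h
  have hpos := tameSymbol_eq_zero_of_add_eq_one_of_pos hπ hz (by rw [ord_inv]; omega)
  calc tameSymbol hπ x y = tameSymbol hπ x (-x * (y * (-x)⁻¹)) := by
        rw [mul_comm y, mul_inv_cancel_left]
    _ = 0 := by
      rw [tameSymbol_mul_right, tameSymbol_neg_self, zero_add, ← neg_neg (tameSymbol hπ x _),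
        ← tameSymbol_inv_left, hpos, neg_zero]

theorem tameSymbol_eq_zero_of_add_eq_one {x y : Kˣ} (h : (x : K) + y = 1) :
    tameSymbol hπ x y = 0 := by
  have h' : (y : K) + x = 1 := by rwa [add_comm]
  rcases lt_trichotomy (ord hπ x) 0 with hx | hx | hx
  · exact tameSymbol_eq_zero_of_add_eq_one_of_neg hπ h hx
  · rcases lt_trichotomy (ord hπ y) 0 with hy | hy | hy
    · rw [← neg_eq_zero, ← tameSymbol_swap, tameSymbol_eq_zero_of_add_eq_one_of_neg hπ h' hy]
    · simp [tameSymbol, hx, hy]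
    · rw [← neg_eq_zero, ← tameSymbol_swap, tameSymbol_eq_zero_of_add_eq_one_of_pos hπ h' hy]
  · exact tameSymbol_eq_zero_of_add_eq_one_of_pos hπ h hx

noncomputable def tameSymbolBilin : Additive Kˣ →+ Additive Kˣ →+ Additive (ResidueField O)ˣ :=
  .mk' (fun x ↦ .mk' (fun y ↦ tameSymbol hπ x.toMul y.toMul) fun _ _ ↦ tameSymbol_mul_right hπ ..)
    fun _ _ ↦ AddMonoidHom.ext fun _ ↦ tameSymbol_mul_left hπ ..

variable (K) in
noncomputable def tameHom : MilnorK2 K →+ Additive (ResidueField O)ˣ :=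
  let t := TensorProduct.liftAddHom (tameSymbolBilin (K := K) hπ) fun r m n ↦ by
    rw [map_zsmul, AddMonoidHom.zsmul_apply, map_zsmul]
  ((SteinbergRel K).liftQ t.toIntLinearMap <| Submodule.span_le.mpr <| by
    rintro _ ⟨x, y, hxy, rfl⟩
    exact tameSymbol_eq_zero_of_add_eq_one hπ hxy).toAddMonoidHom

end IsDiscreteValuationRing

theorem tame_symbol_exists_unique_general
    (O K : Type*) [CommRing O] [IsDomain O] [IsDiscreteValuationRing O]
    [Field K] [Algebra O K] [IsFractionRing O K]
    (π : O) (hπ : Irreducible π) :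
    ∃! d : MilnorK2 K →+ Additive (ResidueField O)ˣ,
      (∀ (u : Oˣ) (πK : Kˣ), (πK : K) = algebraMap O K π →
          d (milnorSymbol (Units.map (algebraMap O K).toMonoidHom u) πK)
            = Additive.ofMul (Units.map (residue O).toMonoidHom u)) ∧
        ∀ u v : Oˣ,
          d (milnorSymbol (Units.map (algebraMap O K).toMonoidHom u)
              (Units.map (algebraMap O K).toMonoidHom v)) = 0 := by
  open IsDiscreteValuationRing in
  refine ⟨tameHom K hπ, ⟨fun u πK hπK ↦ ?_, tameSymbol_unitsMap_unitsMap hπ⟩, fun d hd ↦ ?_⟩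
  · obtain rfl : πK = uniformizerUnit K hπ := Units.ext hπK
    exact tameSymbol_unitsMap_uniformizerUnit hπ u
  · exact MilnorK2.addMonoidHom_ext_of_irreducible hπ
      (fun u v ↦ (hd.2 u v).trans (tameSymbol_unitsMap_unitsMap hπ u v).symm)
      (fun u ↦ (hd.1 u _ rfl).trans (tameSymbol_unitsMap_uniformizerUnit hπ u).symm)

/-- Let `K` be a complete discretely valued field with valuation ring `O`, residue field
`k` and uniformizer `π`.  There is a unique homomorphism `∂ : K₂(K) → k^×` (the tame
symbol) with `∂({u, π}) = ū` and `∂({u, v}) = 1` for all units `u, v` of `O`. -/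
theorem tame_symbol_exists_unique
    (O K : Type*) [CommRing O] [IsDomain O] [IsDiscreteValuationRing O]
    [IsAdicComplete (maximalIdeal O) O]
    [Field K] [Algebra O K] [IsFractionRing O K]
    (π : O) (hπ : Irreducible π) :
    ∃! d : MilnorK2 K →+ Additive (ResidueField O)ˣ,
      (∀ (u : Oˣ) (πK : Kˣ), (πK : K) = algebraMap O K π →
          d (milnorSymbol (Units.map (algebraMap O K).toMonoidHom u) πK)
            = Additive.ofMul (Units.map (residue O).toMonoidHom u)) ∧
        ∀ u v : Oˣ,
          d (milnorSymbol (Units.map (algebraMap O K).toMonoidHom u)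
              (Units.map (algebraMap O K).toMonoidHom v)) = 0 :=
  tame_symbol_exists_unique_general O K π hπ
end

section
/- Let K be a complete discretely valued field with residue field k and let L/K be a finite unramified extension (i.e. a uniformizer of K remains a uniformizer of L and the residue extension is separable). Then 1 + M_K ⊆ N_{L/K}(L^×), i.e. every principal unit of K is a norm from L. -/
/-!
Let `π` be a uniformizer of `K`. For `t ∈ O_L` one has
`N(1 + π^(n+1) t) ≡ 1 + π^(n+1) Tr(t) mod π^(n+2)`, and since `L/K` is unramified the trace
reduces modulo `π` to the trace of the separable residue extension, which is surjective. So a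
principal unit `x` can be matched by norms to any `π`-adic order, by multiplying the current
approximation by a correction `1 + π^(n+1) t`. The partial products converge in `O_L`, a finite
free `O_K`-module and hence `π`-adically complete, and the norm is `π`-adically continuous, so
the limit has norm `x`.
-/

open IsLocalRing

theorem Module.Basis.mem_ideal_smul_top_iff {ι R M : Type*} [CommRing R] [AddCommGroup M]
    [Module R M] (b : Module.Basis ι R M) (I : Ideal R) (x : M) :
    x ∈ I • (⊤ : Submodule R M) ↔ ∀ i, b.repr x i ∈ I := by
  refine ⟨fun hx i => ?_, fun hx => ?_⟩
  · refine Submodule.smul_induction_on hx (fun r hr m _ => ?_) fun m m' hm hm' => ?_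
    · simpa using I.mul_mem_right _ hr
    · simpa using I.add_mem hm hm'
  · rw [← b.linearCombination_repr x, Finsupp.linearCombination_apply]
    exact Submodule.sum_mem _ fun i _ => Submodule.smul_mem_smul (hx i) trivial

theorem IsPrecomplete.of_basis {ι R M : Type*} [Finite ι] [CommRing R] [AddCommGroup M]
    [Module R M] {I : Ideal R} [IsPrecomplete I R] (b : Module.Basis ι R M) :
    IsPrecomplete I M where
  prec' f hf := by
    have hcoord : ∀ i, ∃ c : R, ∀ n, b.repr (f n) i ≡ c [SMOD (I ^ n • ⊤ : Submodule R R)] :=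
      fun i => IsPrecomplete.prec ‹_› fun hmn => by
        have := hf hmn
        rw [SModEq.sub_mem, b.mem_ideal_smul_top_iff] at this
        simpa [SModEq.sub_mem] using this i
    choose c hc using hcoord
    refine ⟨b.equivFun.symm c, fun n => ?_⟩
    rw [SModEq.sub_mem, b.mem_ideal_smul_top_iff]
    intro i
    have := hc i n
    rw [SModEq.sub_mem, smul_eq_mul, Ideal.mul_top] at this
    rwa [← b.equivFun_apply, map_sub, LinearEquiv.apply_symm_apply]

theorem Submodule.mem_ideal_span_singleton_pow_smul_top_iff {R M : Type*} [CommRing R]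
    [AddCommGroup M] [Module R M] (π : R) (n : ℕ) (z : M) :
    z ∈ Ideal.span {π} ^ n • (⊤ : Submodule R M) ↔ ∃ w, π ^ n • w = z := by
  simp [Ideal.span_singleton_pow, Submodule.ideal_span_singleton_smul,
    Submodule.mem_smul_pointwise_iff_exists]

theorem Algebra.dvd_norm_add_smul_sub_norm {A B : Type*} [CommRing A] [CommRing B] [Algebra A B]
    [Module.Free A B] [Module.Finite A B] (a : A) (x w : B) :
    a ∣ Algebra.norm A (x + a • w) - Algebra.norm A x := by
  classical
  let b := Module.Free.chooseBasis A B
  rw [← Ideal.mem_span_singleton, ← Ideal.Quotient.eq, Algebra.norm_eq_matrix_det b,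
    Algebra.norm_eq_matrix_det b, RingHom.map_det, RingHom.map_det]
  congr 1
  ext i j
  simp [Ideal.Quotient.eq_zero_iff_mem.mpr (Ideal.mem_span_singleton_self a)]

theorem isUnit_of_dvd_sub_one {R : Type*} [CommRing R] {π a : R}
    (hπ : π ∈ (⊥ : Ideal R).jacobson) (ha : π ∣ a - 1) : IsUnit a := by
  obtain ⟨c, hc⟩ := ha
  simpa [sub_eq_iff_eq_add.mp hc] using Ideal.mem_jacobson_bot.mp hπ c

section Approximation

variable {A B : Type*} [CommRing A] [CommRing B] [Algebra A B] [Module.Free A B]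
  [Module.Finite A B] {π : A}

theorem exists_dvd_sub_norm_mul_one_add_smul
    (htr : ∀ s : A, ∃ t : B, π ∣ Algebra.trace A B t - s) {x : A} {g : B}
    (hg : IsUnit (Algebra.norm A g)) {n : ℕ} (hxg : π ^ (n + 1) ∣ x - Algebra.norm A g) :
    ∃ t : B, π ^ (n + 2) ∣ x - Algebra.norm A (g * (1 + π ^ (n + 1) • t)) := by
  obtain ⟨e, he⟩ := hxg
  obtain ⟨v, hv⟩ := hg.exists_right_inv
  obtain ⟨t, d, hd⟩ := htr (v * e)
  obtain ⟨r, hr⟩ := Algebra.norm_one_add_smul (π ^ (n + 1)) t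
  -- `x - N(g (1 + π^(n+1) t)) ≡ π^(n+1) N(g) (v e - Tr t) mod π^(n+2)`, with `v = N(g)⁻¹`.
  refine ⟨t, -(Algebra.norm A g * (d + r * π ^ n)), ?_⟩
  rw [map_mul, hr]
  linear_combination he - π ^ (n + 1) * Algebra.norm A g * hd - π ^ (n + 1) * e * hv

theorem exists_seq_dvd_sub_norm (hπ : π ∈ (⊥ : Ideal A).jacobson)
    (htr : ∀ s : A, ∃ t : B, π ∣ Algebra.trace A B t - s) {x : A} (hx : π ∣ x - 1) :
    ∃ g : ℕ → B, ∀ n, π ^ (n + 1) ∣ x - Algebra.norm A (g n) ∧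
      ∃ w, π ^ (n + 1) • w = g (n + 1) - g n := by
  have step : ∀ (n : ℕ) (g : B), ∃ t : B, π ^ (n + 1) ∣ x - Algebra.norm A g →
      π ^ (n + 2) ∣ x - Algebra.norm A (g * (1 + π ^ (n + 1) • t)) := by
    intro n g
    by_cases hxg : π ^ (n + 1) ∣ x - Algebra.norm A g
    · have hg : IsUnit (Algebra.norm A g) := isUnit_of_dvd_sub_one hπ <| by
        simpa using (dvd_pow_self π n.succ_ne_zero |>.trans hxg).neg_right.add hx
      obtain ⟨t, ht⟩ := exists_dvd_sub_norm_mul_one_add_smul htr hg hxg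
      exact ⟨t, fun _ => ht⟩
    · exact ⟨0, fun h => absurd h hxg⟩
  choose t ht using step
  let g : ℕ → B := fun n => Nat.rec 1 (fun n g => g * (1 + π ^ (n + 1) • t n g)) n
  refine ⟨g, fun n => ⟨?_, g n * t n (g n), by simp [g, mul_add]⟩⟩
  induction n with
  | zero => simpa [g] using hx
  | succ n ih => exact ht n (g n) ih

theorem Algebra.exists_norm_eq_of_dvd_sub_one [IsAdicComplete (Ideal.span {π}) A]
    (htr : ∀ s : A, ∃ t : B, π ∣ Algebra.trace A B t - s) {x : A} (hx : π ∣ x - 1) :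
    ∃ y : B, Algebra.norm A y = x := by
  obtain ⟨g, hg⟩ := exists_seq_dvd_sub_norm
    (IsAdicComplete.le_jacobson_bot _ (Ideal.mem_span_singleton_self π)) htr hx
  have : IsPrecomplete (Ideal.span {π}) B := .of_basis (Module.Free.chooseBasis A B)
  have hcauchy : AdicCompletion.IsAdicCauchy (Ideal.span {π}) B g :=
    (AdicCompletion.isAdicCauchy_iff _ _ g).mpr fun n => by
      obtain ⟨w, hw⟩ := (hg n).2
      rw [SModEq.sub_mem, Submodule.mem_ideal_span_singleton_pow_smul_top_iff]
      exact ⟨-(π • w), by rw [smul_neg, smul_smul, ← pow_succ, hw, neg_sub]⟩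
  obtain ⟨y, hy⟩ := IsPrecomplete.prec ‹_› hcauchy
  refine ⟨y, (IsHausdorff.eq_iff_smodEq (I := Ideal.span {π})).mpr fun n => ?_⟩
  obtain ⟨w, hw⟩ := (Submodule.mem_ideal_span_singleton_pow_smul_top_iff π n _).mp
    (SModEq.sub_mem.mp (hy n).symm)
  have hy_g : π ^ n ∣ Algebra.norm A y - Algebra.norm A (g n) := by
    simpa [hw] using Algebra.dvd_norm_add_smul_sub_norm (π ^ n) (g n) w
  have hx_g : π ^ n ∣ x - Algebra.norm A (g n) := (pow_dvd_pow π n.le_succ).trans (hg n).1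
  rw [SModEq.sub_mem, Submodule.mem_ideal_span_singleton_pow_smul_top_iff]
  simpa [Dvd.dvd, eq_comm] using hy_g.sub hx_g

end Approximation

section Unramified

attribute [local instance] Ideal.Quotient.field

variable {A B : Type*} [CommRing A] [IsLocalRing A] [CommRing B] [Algebra A B]

theorem exists_trace_sub_mem_maximalIdeal [Module.Free A B] [Module.Finite A B]
    [(Ideal.map (algebraMap A B) (maximalIdeal A)).IsMaximal]
    [Algebra.IsSeparable (A ⧸ maximalIdeal A) (B ⧸ Ideal.map (algebraMap A B) (maximalIdeal A))]
    (a : A) : ∃ t : B, Algebra.trace A B t - a ∈ maximalIdeal A := by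
  have : Module.Finite (A ⧸ maximalIdeal A) (B ⧸ Ideal.map (algebraMap A B) (maximalIdeal A)) :=
    .of_restrictScalars_finite A _ _
  obtain ⟨z, hz⟩ := Algebra.trace_surjective (A ⧸ maximalIdeal A)
    (B ⧸ Ideal.map (algebraMap A B) (maximalIdeal A)) (Ideal.Quotient.mk _ a)
  obtain ⟨t, rfl⟩ := Ideal.Quotient.mk_surjective z
  rw [Algebra.trace_quotient_mk, Ideal.Quotient.eq] at hz
  exact ⟨t, hz⟩

theorem isSeparable_quotient_map_maximalIdeal [IsLocalRing B]
    (hunr : Ideal.map (algebraMap A B) (maximalIdeal A) = maximalIdeal B)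
    [Algebra (ResidueField A) (ResidueField B)]
    (hres : ∀ a : A,
      algebraMap (ResidueField A) (ResidueField B) (residue A a) = residue B (algebraMap A B a))
    [Algebra.IsSeparable (ResidueField A) (ResidueField B)] :
    Algebra.IsSeparable (A ⧸ maximalIdeal A) (B ⧸ Ideal.map (algebraMap A B) (maximalIdeal A)) :=
  .of_equiv_equiv (B₁ := ResidueField B) (RingEquiv.refl (ResidueField A))
    (Ideal.quotEquivOfEq hunr).symm <| RingHom.ext fun a => by
      obtain ⟨a, rfl⟩ := Ideal.Quotient.mk_surjective a
      change Ideal.Quotient.mk _ (algebraMap A B a) = (Ideal.quotEquivOfEq hunr).symm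
        (algebraMap (ResidueField A) (ResidueField B) (residue A a))
      rw [hres]
      rfl

end Unramified

theorem Algebra.norm_algebraMap_of_isFractionRing (A B K L : Type*) [CommRing A] [IsDomain A]
    [CommRing B] [IsIntegrallyClosed B] [Field K] [Field L] [Algebra A K] [IsFractionRing A K]
    [Algebra B L] [IsFractionRing B L] [Algebra A B] [Algebra K L] [Algebra A L]
    [IsScalarTower A B L] [IsScalarTower A K L] [Algebra.IsAlgebraic K L]
    [Module.Free A B] [Module.Finite A B] (b : B) :
    Algebra.norm K (algebraMap B L b) = algebraMap A K (Algebra.norm A b) := by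
  have : IsLocalization (Algebra.algebraMapSubmonoid B (nonZeroDivisors A)) L :=
    IsIntegralClosure.isLocalization A K L B
  exact Algebra.norm_localization A (nonZeroDivisors A) b

/-- Let `K` be a complete discretely valued field with valuation ring `A`, and `L/K` a
finite unramified extension with valuation ring `B` (the maximal ideal of `A` generates
that of `B`, and the residue extension is separable).  Then every principal unit of `K`
is a norm from `L` : `1 + M_K ⊆ N_{L/K}(L^×)`. -/
theorem principal_units_are_norms_of_unramified
    (A B K L : Type*) [CommRing A] [IsDomain A] [IsDiscreteValuationRing A]
    [IsAdicComplete (maximalIdeal A) A]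
    [CommRing B] [IsDomain B] [IsDiscreteValuationRing B]
    [Field K] [Field L] [Algebra A K] [IsFractionRing A K]
    [Algebra B L] [IsFractionRing B L]
    [Algebra A B] [Algebra K L] [Algebra A L]
    [IsScalarTower A B L] [IsScalarTower A K L]
    [FiniteDimensional K L] [Module.Finite A B]
    (hunr : Ideal.map (algebraMap A B) (maximalIdeal A) = maximalIdeal B)
    [Algebra (ResidueField A) (ResidueField B)]
    (hres : ∀ a : A,
      algebraMap (ResidueField A) (ResidueField B) (residue A a) = residue B (algebraMap A B a))
    [Algebra.IsSeparable (ResidueField A) (ResidueField B)] :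
    ∀ x : A, x - 1 ∈ maximalIdeal A →
      ∃ y : L, Algebra.norm K y = algebraMap A K x := by
  intro x hx
  obtain ⟨π, hπ⟩ := IsDiscreteValuationRing.exists_irreducible A
  have hmax : maximalIdeal A = Ideal.span {π} := hπ.maximalIdeal_eq
  have : IsAdicComplete (Ideal.span {π}) A := hmax ▸ ‹_›
  have : Module.IsTorsionFree A L := .trans_faithfulSMul A K L
  have : Module.IsTorsionFree A B := .of_faithfulSMul B A L
  have : Module.Free A B := Module.free_of_finite_type_torsion_free'
  have : (Ideal.map (algebraMap A B) (maximalIdeal A)).IsMaximal := hunr ▸ inferInstance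
  have := isSeparable_quotient_map_maximalIdeal hunr hres
  obtain ⟨y, hy⟩ := Algebra.exists_norm_eq_of_dvd_sub_one (B := B) (π := π)
    (fun s => by
      simpa [← Ideal.mem_span_singleton, ← hmax] using exists_trace_sub_mem_maximalIdeal s)
    (by rwa [← Ideal.mem_span_singleton, ← hmax])
  exact ⟨algebraMap B L y, by rw [Algebra.norm_algebraMap_of_isFractionRing A B K L, hy]⟩
end

section
/- Let K be a Henselian discretely valued field with completion K̂, and let n ≥ 1. Then the inclusion K ⊆ K̂ induces an isomorphism K^×/(1 + M_K^n) ≅ K̂^×/(1 + M_{K̂}^n). -/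
/-!
Since `M_K` generates `M_{K̂}`, a uniformizer `ϖ` of `K` is one of `K̂`, so every `w ∈ K̂^×` is
`v ϖ^k` with `v` a unit of `O_{K̂}`; density of `O_K` in `O_{K̂}` approximates `v` by a unit `a`
of `O_K` to order `n + 1`, whence `v ∈ a (1 + M_{K̂}^n)`. For the kernel, `K ∩ O_{K̂} = O_K`: if
`y ∉ O_K` then `y⁻¹ ∈ O_K` (a valuation ring) becomes a unit in `O_{K̂}`, hence is a unit
already in `O_K` as `O_K → O_{K̂}` is local. Then `M_{K̂}^n ∩ O_K = M_K^n` finishes.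
-/

open IsLocalRing

theorem irreducible_algebraMap_of_map_maximalIdeal {A B : Type*} [CommRing A] [IsDomain A]
    [IsDiscreteValuationRing A] [CommRing B] [IsDomain B] [IsDiscreteValuationRing B]
    [Algebra A B] (hM : Ideal.map (algebraMap A B) (maximalIdeal A) = maximalIdeal B) {ϖ : A}
    (hϖ : Irreducible ϖ) : Irreducible (algebraMap A B ϖ) := by
  rw [IsDiscreteValuationRing.irreducible_iff_uniformizer] at hϖ ⊢
  rw [← hM, hϖ, Ideal.map_span, Set.image_singleton]

theorem exists_algebraMap_mul_one_add_of_dense {A B : Type*} [CommRing A] [IsLocalRing A]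
    [CommRing B] [IsLocalRing B] [Algebra A B] [IsLocalHom (algebraMap A B)]
    (hdense : ∀ (b : B) (m : ℕ), ∃ a : A, b - algebraMap A B a ∈ maximalIdeal B ^ m)
    (n : ℕ) (v : Bˣ) :
    ∃ a : Aˣ, ∃ x ∈ maximalIdeal B ^ n, (v : B) = algebraMap A B a * (1 + x) := by
  obtain ⟨a, ha⟩ := hdense v (n + 1)
  have haM : (v : B) - algebraMap A B a ∈ maximalIdeal B :=
    Ideal.pow_le_self n.succ_ne_zero ha
  have hunit : IsUnit (algebraMap A B a) :=
    (isUnit_or_isUnit_of_isUnit_add (by rw [add_sub_cancel]; exact v.isUnit)).resolve_right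
      ((mem_maximalIdeal _).1 haM)
  refine ⟨(isUnit_of_map_unit _ _ hunit).unit, ↑hunit.unit⁻¹ * (v - algebraMap A B a),
    Ideal.mul_mem_left _ _ (Ideal.pow_le_pow_right n.le_succ ha), ?_⟩
  rw [IsUnit.unit_spec, mul_add, ← mul_assoc, hunit.mul_val_inv]
  ring

theorem exists_algebraMap_eq_of_algebraMap_eq {A B K L : Type*} [CommRing A] [IsDomain A]
    [ValuationRing A] [CommRing B] [Field K] [Field L] [Algebra A K] [IsFractionRing A K]
    [Algebra B L] [IsFractionRing B L] [Algebra A B] [IsLocalHom (algebraMap A B)]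
    [Algebra K L] [Algebra A L] [IsScalarTower A B L] [IsScalarTower A K L]
    {y : K} {b : B} (h : algebraMap K L y = algebraMap B L b) :
    ∃ a : A, algebraMap A K a = y ∧ algebraMap A B a = b := by
  have hint : IsLocalization.IsInteger A y := by
    rcases ValuationRing.isInteger_or_isInteger A y with hy | ⟨a, ha⟩
    · exact hy
    rcases eq_or_ne y 0 with rfl | hy0
    · exact IsLocalization.isInteger_zero
    have hab : algebraMap A B a * b = 1 := by
      apply IsFractionRing.injective B L
      rw [map_mul, ← IsScalarTower.algebraMap_apply, IsScalarTower.algebraMap_apply A K L, ha,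
        ← h, ← map_mul, inv_mul_cancel₀ hy0, map_one, map_one]
    obtain ⟨u, rfl⟩ := isUnit_of_map_unit _ _ (IsUnit.of_mul_eq_one _ hab)
    exact ⟨↑u⁻¹, by rw [← inv_inv y, ← ha, map_units_inv]⟩
  obtain ⟨a, rfl⟩ := hint
  refine ⟨a, rfl, IsFractionRing.injective B L ?_⟩
  rw [← IsScalarTower.algebraMap_apply, IsScalarTower.algebraMap_apply A K L, h]

theorem exists_units_mul_one_add_of_map_maximalIdeal {A B K L : Type*} [CommRing A] [IsDomain A]
    [IsDiscreteValuationRing A] [CommRing B] [IsDomain B] [IsDiscreteValuationRing B]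
    [Field K] [Field L] [Algebra A K] [IsFractionRing A K] [Algebra B L] [IsFractionRing B L]
    [Algebra A B] [Algebra K L] [Algebra A L] [IsScalarTower A B L] [IsScalarTower A K L]
    (hM : Ideal.map (algebraMap A B) (maximalIdeal A) = maximalIdeal B)
    (hdense : ∀ (b : B) (m : ℕ), ∃ a : A, b - algebraMap A B a ∈ maximalIdeal B ^ m)
    (n : ℕ) (w : Lˣ) :
    ∃ u : Kˣ, ∃ x ∈ maximalIdeal B ^ n, (w : L) = algebraMap K L u * (1 + algebraMap B L x) := by
  have : IsLocalHom (algebraMap A B) := ((local_hom_TFAE _).out 2 0).mp hM.le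
  obtain ⟨ϖ, hϖ⟩ := IsDiscreteValuationRing.exists_irreducible A
  obtain ⟨k, v, hw⟩ := IsDiscreteValuationRing.exists_units_eq_smul_zpow_of_irreducible
    (irreducible_algebraMap_of_map_maximalIdeal hM hϖ) w.ne_zero
  obtain ⟨a, x, hx, hv⟩ := exists_algebraMap_mul_one_add_of_dense hdense n v
  have hϖK : algebraMap A K ϖ ≠ 0 := by simpa using hϖ.ne_zero
  refine ⟨Units.map (algebraMap A K : A →* K) a * Units.mk0 _ hϖK ^ k, x, hx, ?_⟩
  simp only [hw, Units.smul_def, hv, Units.val_mul, Units.coe_map, Units.val_zpow_eq_zpow_val,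
    Units.val_mk0, map_mul, map_zpow₀, map_add, map_one, Algebra.smul_def, MonoidHom.coe_coe,
    ← IsScalarTower.algebraMap_apply]
  ring

theorem units_mod_principal_units_iso_completion_general
    (A B K L : Type*) [CommRing A] [IsDomain A] [IsDiscreteValuationRing A]
    [CommRing B] [IsDomain B] [IsDiscreteValuationRing B]
    [Field K] [Field L] [Algebra A K] [IsFractionRing A K]
    [Algebra B L] [IsFractionRing B L]
    [Algebra A B] [Algebra K L] [Algebra A L]
    [IsScalarTower A B L] [IsScalarTower A K L]
    (hM : Ideal.map (algebraMap A B) (maximalIdeal A) = maximalIdeal B)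
    (hcomap : ∀ m : ℕ,
      (maximalIdeal B ^ m).comap (algebraMap A B) = maximalIdeal A ^ m)
    (hdense : ∀ (b : B) (m : ℕ), ∃ a : A, b - algebraMap A B a ∈ maximalIdeal B ^ m)
    (n : ℕ) :
    (∀ w : Lˣ, ∃ u : Kˣ, ∃ b ∈ maximalIdeal B ^ n,
        (((Units.map (algebraMap K L).toMonoidHom u)⁻¹ * w : Lˣ) : L)
          = 1 + algebraMap B L b) ∧
      ∀ u : Kˣ,
        (∃ b ∈ maximalIdeal B ^ n, algebraMap K L (u : K) = 1 + algebraMap B L b) ↔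
          ∃ a ∈ maximalIdeal A ^ n, (u : K) = 1 + algebraMap A K a := by
  have : IsLocalHom (algebraMap A B) := ((local_hom_TFAE _).out 2 0).mp hM.le
  refine ⟨fun w ↦ ?_, fun u ↦ ⟨?_, ?_⟩⟩
  · obtain ⟨u, x, hx, hw⟩ :=
      exists_units_mul_one_add_of_map_maximalIdeal (K := K) hM hdense n w
    refine ⟨u, x, hx, ?_⟩
    simp only [Units.val_mul, Units.val_inv_eq_inv_val, Units.coe_map, hw,
      RingHom.toMonoidHom_eq_coe, MonoidHom.coe_coe]
    rw [inv_mul_cancel_left₀ (by simp)]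
  · rintro ⟨b, hb, hub⟩
    have hy : algebraMap K L ((u : K) - 1) = algebraMap B L b := by
      rw [map_sub, map_one, hub, add_sub_cancel_left]
    obtain ⟨a, hay, hab⟩ := exists_algebraMap_eq_of_algebraMap_eq (A := A) hy
    refine ⟨a, ?_, by rw [hay, add_sub_cancel]⟩
    rwa [← hcomap n, Ideal.mem_comap, hab]
  · rintro ⟨a, ha, hua⟩
    refine ⟨algebraMap A B a, by rwa [← Ideal.mem_comap, hcomap], ?_⟩
    rw [hua, map_add, map_one, ← IsScalarTower.algebraMap_apply,
      IsScalarTower.algebraMap_apply A B L]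

/-- Let `K` be a Henselian discretely valued field with valuation ring `A`, and let
`K̂` (here `L`) be its completion, with valuation ring `B`.  Then for every `n ≥ 1` the
inclusion `K ⊆ K̂` induces an isomorphism `K^×/(1 + M_K^n) ≅ K̂^×/(1 + M_{K̂}^n)`:
the natural map is surjective modulo `1 + M_{K̂}^n` and an element of `K^×` maps into
`1 + M_{K̂}^n` exactly when it lies in `1 + M_K^n`. -/
theorem units_mod_principal_units_iso_completion
    (A B K L : Type*) [CommRing A] [IsDomain A] [IsDiscreteValuationRing A]
    [HenselianLocalRing A]
    [CommRing B] [IsDomain B] [IsDiscreteValuationRing B]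
    [IsAdicComplete (maximalIdeal B) B]
    [Field K] [Field L] [Algebra A K] [IsFractionRing A K]
    [Algebra B L] [IsFractionRing B L]
    [Algebra A B] [Algebra K L] [Algebra A L]
    [IsScalarTower A B L] [IsScalarTower A K L]
    (hM : Ideal.map (algebraMap A B) (maximalIdeal A) = maximalIdeal B)
    (hcomap : ∀ m : ℕ,
      (maximalIdeal B ^ m).comap (algebraMap A B) = maximalIdeal A ^ m)
    (hdense : ∀ (b : B) (m : ℕ), ∃ a : A, b - algebraMap A B a ∈ maximalIdeal B ^ m)
    (n : ℕ) (hn : 1 ≤ n) :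
    (∀ w : Lˣ, ∃ u : Kˣ, ∃ b ∈ maximalIdeal B ^ n,
        (((Units.map (algebraMap K L).toMonoidHom u)⁻¹ * w : Lˣ) : L)
          = 1 + algebraMap B L b) ∧
      ∀ u : Kˣ,
        (∃ b ∈ maximalIdeal B ^ n, algebraMap K L (u : K) = 1 + algebraMap B L b) ↔
          ∃ a ∈ maximalIdeal A ^ n, (u : K) = 1 + algebraMap A K a :=
  units_mod_principal_units_iso_completion_general A B K L hM hcomap hdense n
end
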